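/- arXiv:1908.08944 — 6 statements merged into one kernel-verified Lean document; each statement's English description precedes it below -/
import Mathlib

section
/- Given a Grothendieck fibration p : C → B with stable fiberwise finite products and stable fiberwise exponentials, every cocartesian morphism in C satisfies Frobenius reciprocity: for a cocartesian lift t : P → Σ_f P of f : A → B, a cartesian lift c : f*Q → Q, and fiberwise product diagrams P ∧ f*Q and (Σ_f P) ∧ Q, the induced morphism t ∧ c : P ∧ f*Q → (Σ_f P) ∧ Q lying over f is again cocartesian. -/
open CategoryTheory CategoryTheory.Limits CategoryTheory.Functor

namespace FOHL

variable {𝒮 : Type*} {𝒳 : Type*} [Category 𝒮] [Category 𝒳]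

variable (p : 𝒳 ⥤ 𝒮)

/-- A binary product diagram in the fiber of `p` over `S`. -/
structure IsFiberProductFan (S : 𝒮) {P Q T : 𝒳} (π₁ : T ⟶ P) (π₂ : T ⟶ Q) : Prop where
  lift₁ : p.IsHomLift (𝟙 S) π₁
  lift₂ : p.IsHomLift (𝟙 S) π₂
  universal : ∀ {X : 𝒳} (u : X ⟶ P) (v : X ⟶ Q),
    p.IsHomLift (𝟙 S) u → p.IsHomLift (𝟙 S) v →
      ∃! w : X ⟶ T, p.IsHomLift (𝟙 S) w ∧ w ≫ π₁ = u ∧ w ≫ π₂ = v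

/-- A binary coproduct diagram in the fiber of `p` over `S`. -/
structure IsFiberCoproductCofan (S : 𝒮) {P Q T : 𝒳} (ι₁ : P ⟶ T) (ι₂ : Q ⟶ T) : Prop where
  lift₁ : p.IsHomLift (𝟙 S) ι₁
  lift₂ : p.IsHomLift (𝟙 S) ι₂
  universal : ∀ {X : 𝒳} (u : P ⟶ X) (v : Q ⟶ X),
    p.IsHomLift (𝟙 S) u → p.IsHomLift (𝟙 S) v →
      ∃! w : T ⟶ X, p.IsHomLift (𝟙 S) w ∧ ι₁ ≫ w = u ∧ ι₂ ≫ w = v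

/-- A terminal object of the fiber of `p` over `S`. -/
structure IsFiberTerminal (S : 𝒮) (T : 𝒳) : Prop where
  isOver : p.obj T = S
  universal : ∀ X : 𝒳, p.obj X = S → ∃! u : X ⟶ T, p.IsHomLift (𝟙 S) u

/-- An initial object of the fiber of `p` over `S`. -/
structure IsFiberInitial (S : 𝒮) (T : 𝒳) : Prop where
  isOver : p.obj T = S
  universal : ∀ X : 𝒳, p.obj X = S → ∃! u : T ⟶ X, p.IsHomLift (𝟙 S) u

/-- An exponential diagram in the fiber of `p` over `S`: `E` is the exponential `P ⟹ Q`,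
`π₁ : W ⟶ E`, `π₂ : W ⟶ P` is a product fan exhibiting `W = E ∧ P`, and `ev : W ⟶ Q` is the
evaluation morphism. -/
structure IsFiberExponential (S : 𝒮) {P Q E W : 𝒳}
    (π₁ : W ⟶ E) (π₂ : W ⟶ P) (ev : W ⟶ Q) : Prop where
  fan : IsFiberProductFan p S π₁ π₂
  ev_lift : p.IsHomLift (𝟙 S) ev
  universal : ∀ {X V : 𝒳} (ρ₁ : V ⟶ X) (ρ₂ : V ⟶ P), IsFiberProductFan p S ρ₁ ρ₂ →
    ∀ g : V ⟶ Q, p.IsHomLift (𝟙 S) g →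
      ∃! h : X ⟶ E, p.IsHomLift (𝟙 S) h ∧
        ∀ m : V ⟶ W, p.IsHomLift (𝟙 S) m → m ≫ π₁ = ρ₁ ≫ h → m ≫ π₂ = ρ₂ →
          m ≫ ev = g

/-- Stability of fiberwise binary product diagrams under pullback along `f`. -/
def ProductsStableAlong {R S : 𝒮} (f : R ⟶ S) : Prop :=
  ∀ {P Q T P' Q' T' : 𝒳} (π₁ : T ⟶ P) (π₂ : T ⟶ Q)
    (π₁' : T' ⟶ P') (π₂' : T' ⟶ Q') (cP : P' ⟶ P) (cQ : Q' ⟶ Q) (cT : T' ⟶ T),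
    IsFiberProductFan p S π₁ π₂ →
    p.IsStronglyCartesian f cP → p.IsStronglyCartesian f cQ → p.IsStronglyCartesian f cT →
    p.IsHomLift (𝟙 R) π₁' → p.IsHomLift (𝟙 R) π₂' →
    π₁' ≫ cP = cT ≫ π₁ → π₂' ≫ cQ = cT ≫ π₂ →
    IsFiberProductFan p R π₁' π₂'

/-- Stability of fiberwise binary coproduct diagrams under pullback along `f`. -/
def CoproductsStableAlong {R S : 𝒮} (f : R ⟶ S) : Prop :=
  ∀ {P Q T P' Q' T' : 𝒳} (ι₁ : P ⟶ T) (ι₂ : Q ⟶ T)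
    (ι₁' : P' ⟶ T') (ι₂' : Q' ⟶ T') (cP : P' ⟶ P) (cQ : Q' ⟶ Q) (cT : T' ⟶ T),
    IsFiberCoproductCofan p S ι₁ ι₂ →
    p.IsStronglyCartesian f cP → p.IsStronglyCartesian f cQ → p.IsStronglyCartesian f cT →
    p.IsHomLift (𝟙 R) ι₁' → p.IsHomLift (𝟙 R) ι₂' →
    ι₁' ≫ cT = cP ≫ ι₁ → ι₂' ≫ cT = cQ ≫ ι₂ →
    IsFiberCoproductCofan p R ι₁' ι₂'

/-- Stability of fiberwise exponential diagrams under pullback along `f`. -/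
def ExponentialsStableAlong {R S : 𝒮} (f : R ⟶ S) : Prop :=
  ∀ {P Q E W P' Q' E' W' : 𝒳} (π₁ : W ⟶ E) (π₂ : W ⟶ P) (ev : W ⟶ Q)
    (π₁' : W' ⟶ E') (π₂' : W' ⟶ P') (ev' : W' ⟶ Q')
    (cE : E' ⟶ E) (cP : P' ⟶ P) (cQ : Q' ⟶ Q) (cW : W' ⟶ W),
    IsFiberExponential p S π₁ π₂ ev →
    p.IsStronglyCartesian f cE → p.IsStronglyCartesian f cP →
    p.IsStronglyCartesian f cQ → p.IsStronglyCartesian f cW →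
    p.IsHomLift (𝟙 R) π₁' → p.IsHomLift (𝟙 R) π₂' → p.IsHomLift (𝟙 R) ev' →
    π₁' ≫ cE = cW ≫ π₁ → π₂' ≫ cP = cW ≫ π₂ → ev' ≫ cQ = cW ≫ ev →
    IsFiberExponential p R π₁' π₂' ev'

/-- A `Π`-diagram over `f : R ⟶ S` based on `P` (with `P` in the fiber over `R`): a cartesian
morphism `c : X ⟶ Y` over `f` (so `X = f*Y`, `Y = Π_f P`) and a vertical evaluation morphism
`ε : X ⟶ P` which is universal: for every cartesian `c' : X' ⟶ Y'` over `f` and vertical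
`u : X' ⟶ P` there is a unique vertical `v : Y' ⟶ Y` whose pullback composed with `ε` is `u`. -/
structure IsPiDiagram {R S : 𝒮} (f : R ⟶ S) {P X Y : 𝒳} (c : X ⟶ Y) (ε : X ⟶ P) : Prop where
  cart : p.IsStronglyCartesian f c
  vert : p.IsHomLift (𝟙 R) ε
  universal : ∀ {X' Y' : 𝒳} (c' : X' ⟶ Y'), p.IsStronglyCartesian f c' →
    ∀ u : X' ⟶ P, p.IsHomLift (𝟙 R) u →
      ∃! v : Y' ⟶ Y, p.IsHomLift (𝟙 S) v ∧
        ∀ w : X' ⟶ X, p.IsHomLift (𝟙 R) w → w ≫ c = c' ≫ v → w ≫ ε = u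

/-- The Beck–Chevalley condition: stability of a `Π`-diagram over `g : Cc ⟶ D` along
`k : Bb ⟶ D`.  For every pullback square and every pullback of the diagram along the square,
the resulting diagram is again a `Π`-diagram. -/
def PiDiagramStableAlong {Cc D : 𝒮} (g : Cc ⟶ D) {P X Y : 𝒳} (c : X ⟶ Y) (ε : X ⟶ P)
    {Bb : 𝒮} (k : Bb ⟶ D) : Prop :=
  ∀ {A : 𝒮} (f : A ⟶ Bb) (h : A ⟶ Cc), IsPullback f h k g →
    ∀ {P' X' Y' : 𝒳} (cP : P' ⟶ P) (cX : X' ⟶ X) (cY : Y' ⟶ Y)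
      (q : X' ⟶ Y') (ε' : X' ⟶ P'),
      p.IsStronglyCartesian h cP → p.IsStronglyCartesian h cX → p.IsStronglyCartesian k cY →
      p.IsHomLift f q → q ≫ cY = cX ≫ c →
      p.IsHomLift (𝟙 A) ε' → ε' ≫ cP = cX ≫ ε →
      IsPiDiagram p f q ε'

/-- Stability of a cocartesian lift `t : P ⟶ Z` of `g : Cc ⟶ D` along `k : Bb ⟶ D`:
for every pullback square, the induced comparison morphism between the pullbacks is again
cocartesian. -/
def CocartesianStableAlong {Cc D : 𝒮} (g : Cc ⟶ D) {P Z : 𝒳} (t : P ⟶ Z)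
    {Bb : 𝒮} (k : Bb ⟶ D) : Prop :=
  ∀ {A : 𝒮} (f : A ⟶ Bb) (h : A ⟶ Cc), IsPullback f h k g →
    ∀ {P' Z' : 𝒳} (cP : P' ⟶ P) (cZ : Z' ⟶ Z) (m : P' ⟶ Z'),
      p.IsStronglyCartesian h cP → p.IsStronglyCartesian k cZ →
      p.IsHomLift f m → m ≫ cZ = cP ≫ t →
      p.IsStronglyCocartesian f m

end FOHL

/-! For `Y` over `S`, vertical maps `(Σ_f P) ∧ Q ⟶ Y` correspond to vertical maps
`Σ_f P ⟶ (Q ⟹ Y)`, hence (`t` being cocartesian) to maps `P ⟶ (Q ⟹ Y)` over `f`, hence to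
vertical maps `P ⟶ f*(Q ⟹ Y) = (f*Q ⟹ f*Y)` (stability of exponentials), hence to vertical maps
`P ∧ f*Q ⟶ f*Y`, i.e. to maps `P ∧ f*Q ⟶ Y` over `f`. Uncurrying commutes with pulling back, so
this bijection is precomposition with `t ∧ c`: thus `t ∧ c` is cocartesian, and in a fibration
cocartesian morphisms are strongly cocartesian. -/

namespace FOHL

variable {𝒮 : Type*} {𝒳 : Type*} [Category 𝒮] [Category 𝒳] {p : 𝒳 ⥤ 𝒮}

lemma isStronglyCocartesian_of_isCocartesian [p.IsFibered] {R S : 𝒮} (f : R ⟶ S) {a b : 𝒳}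
    (φ : a ⟶ b) [p.IsCocartesian f φ] : p.IsStronglyCocartesian f φ where
  universal_property' {b'} g φ' _ := by
    obtain ⟨b'', χ, _⟩ := IsPreFibered.exists_isCartesian p rfl g
    let ψ := IsCocartesian.map p f φ (IsStronglyCartesian.map p g χ (f' := f ≫ g) rfl φ')
    refine ⟨ψ ≫ χ, ⟨inferInstance, by simp [ψ]⟩, ?_⟩
    rintro χ' ⟨_, hχ'⟩
    rw [← IsStronglyCartesian.fac p g χ (Category.id_comp g).symm χ']
    congr 1
    apply IsCocartesian.map_uniq
    apply IsStronglyCartesian.ext p g χ f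
    simp [hχ']

namespace IsFiberProductFan

variable {S : 𝒮} {P Q T X : 𝒳} {π₁ : T ⟶ P} {π₂ : T ⟶ Q}

noncomputable def lift (hT : IsFiberProductFan p S π₁ π₂) (u : X ⟶ P) (v : X ⟶ Q)
    [p.IsHomLift (𝟙 S) u] [p.IsHomLift (𝟙 S) v] : X ⟶ T :=
  (hT.universal u v ‹_› ‹_›).exists.choose

variable (hT : IsFiberProductFan p S π₁ π₂) (u : X ⟶ P) (v : X ⟶ Q)
  [p.IsHomLift (𝟙 S) u] [p.IsHomLift (𝟙 S) v]

instance lift_isHomLift : p.IsHomLift (𝟙 S) (hT.lift u v) :=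
  (hT.universal u v ‹_› ‹_›).exists.choose_spec.1

lemma lift_fst : hT.lift u v ≫ π₁ = u :=
  (hT.universal u v ‹_› ‹_›).exists.choose_spec.2.1

lemma lift_snd : hT.lift u v ≫ π₂ = v :=
  (hT.universal u v ‹_› ‹_›).exists.choose_spec.2.2

include hT in
lemma hom_ext {w w' : X ⟶ T} [p.IsHomLift (𝟙 S) w] [p.IsHomLift (𝟙 S) w']
    (h₁ : w ≫ π₁ = w' ≫ π₁) (h₂ : w ≫ π₂ = w' ≫ π₂) : w = w' := by
  have := hT.lift₁
  have := hT.lift₂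
  exact (hT.universal (w ≫ π₁) (w ≫ π₂) inferInstance inferInstance).unique
    ⟨inferInstance, rfl, rfl⟩ ⟨inferInstance, h₁.symm, h₂.symm⟩

lemma hom_ext_of_isCartesian {R : 𝒮} {f : R ⟶ S} {W P' Q' W' : 𝒳} {ω₁ : W ⟶ P} {ω₂ : W ⟶ Q}
    {π₁' : W' ⟶ P'} {π₂' : W' ⟶ Q'} (hW' : IsFiberProductFan p R π₁' π₂')
    {cP : P' ⟶ P} {cQ : Q' ⟶ Q} {cW : W' ⟶ W}
    [p.IsCartesian f cP] [p.IsCartesian f cQ] [p.IsCartesian f cW]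
    (h₁ : π₁' ≫ cP = cW ≫ ω₁) (h₂ : π₂' ≫ cQ = cW ≫ ω₂)
    {u v : X ⟶ W} [p.IsHomLift f u] [p.IsHomLift f v]
    (hu₁ : u ≫ ω₁ = v ≫ ω₁) (hu₂ : u ≫ ω₂ = v ≫ ω₂) : u = v := by
  have := hW'.lift₁
  have := hW'.lift₂
  have key : IsCartesian.map p f cW u = IsCartesian.map p f cW v := by
    refine hW'.hom_ext (IsCartesian.ext p f cP _ _ ?_) (IsCartesian.ext p f cQ _ _ ?_)
    · simp only [Category.assoc, h₁, IsCartesian.fac_assoc, hu₁]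
    · simp only [Category.assoc, h₂, IsCartesian.fac_assoc, hu₂]
  calc u = IsCartesian.map p f cW u ≫ cW := (IsCartesian.fac p f cW u).symm
    _ = v := by rw [key, IsCartesian.fac]

end IsFiberProductFan

namespace IsFiberExponential

variable {S : 𝒮} {P Q E W X V : 𝒳} {π₁ : W ⟶ E} {π₂ : W ⟶ P} {ev : W ⟶ Q}
  {ρ₁ : V ⟶ X} {ρ₂ : V ⟶ P}

/-- The transpose `X ∧ P ⟶ Q` of `h : X ⟶ (P ⟹ Q)`, where `X ∧ P` is given by the fan `hV`. -/
noncomputable def uncurry (hE : IsFiberExponential p S π₁ π₂ ev)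
    (hV : IsFiberProductFan p S ρ₁ ρ₂) (h : X ⟶ E) [p.IsHomLift (𝟙 S) h] : V ⟶ Q :=
  haveI := hV.lift₁
  haveI := hV.lift₂
  hE.fan.lift (ρ₁ ≫ h) ρ₂ ≫ ev

variable (hE : IsFiberExponential p S π₁ π₂ ev) (hV : IsFiberProductFan p S ρ₁ ρ₂)

instance uncurry_isHomLift (h : X ⟶ E) [p.IsHomLift (𝟙 S) h] :
    p.IsHomLift (𝟙 S) (hE.uncurry hV h) := by
  have := hE.ev_lift
  unfold uncurry
  infer_instance

lemma uncurry_eq_iff (h : X ⟶ E) [p.IsHomLift (𝟙 S) h] (g : V ⟶ Q) :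
    hE.uncurry hV h = g ↔ ∀ m : V ⟶ W, p.IsHomLift (𝟙 S) m →
      m ≫ π₁ = ρ₁ ≫ h → m ≫ π₂ = ρ₂ → m ≫ ev = g := by
  have := hV.lift₁
  have := hV.lift₂
  constructor
  · rintro rfl m _ hm₁ hm₂
    rw [show m = hE.fan.lift (ρ₁ ≫ h) ρ₂ from
      hE.fan.hom_ext (by rw [hm₁, hE.fan.lift_fst]) (by rw [hm₂, hE.fan.lift_snd])]
    rfl
  · intro H
    exact H _ inferInstance (hE.fan.lift_fst _ _) (hE.fan.lift_snd _ _)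

include hV in
lemma uncurry_injective {h h' : X ⟶ E} [p.IsHomLift (𝟙 S) h] [p.IsHomLift (𝟙 S) h']
    (eq : hE.uncurry hV h = hE.uncurry hV h') : h = h' :=
  (hE.universal ρ₁ ρ₂ hV _ inferInstance).unique
    ⟨inferInstance, (hE.uncurry_eq_iff hV h _).1 eq⟩
    ⟨inferInstance, (hE.uncurry_eq_iff hV h' _).1 rfl⟩

lemma exists_uncurry_eq (g : V ⟶ Q) [p.IsHomLift (𝟙 S) g] :
    ∃ (h : X ⟶ E) (_ : p.IsHomLift (𝟙 S) h), hE.uncurry hV h = g :=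
  let ⟨h, ⟨_, H⟩, _⟩ := hE.universal ρ₁ ρ₂ hV g inferInstance
  ⟨h, inferInstance, (hE.uncurry_eq_iff hV h g).2 H⟩

end IsFiberExponential

lemma IsFiberExponential.exists_pullback [p.IsFibered] {R S : 𝒮} {f : R ⟶ S}
    (hstable : ExponentialsStableAlong p f) {P Q E W P' : 𝒳} {π₁ : W ⟶ E} {π₂ : W ⟶ P}
    {ev : W ⟶ Q} (hE : IsFiberExponential p S π₁ π₂ ev) {cP : P' ⟶ P}
    (hcP : p.IsStronglyCartesian f cP) :
    ∃ (E' W' Q' : 𝒳) (π₁' : W' ⟶ E') (π₂' : W' ⟶ P') (ev' : W' ⟶ Q')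
      (cE : E' ⟶ E) (cW : W' ⟶ W) (cQ : Q' ⟶ Q),
      p.IsCartesian f cE ∧ p.IsCartesian f cW ∧ p.IsCartesian f cQ ∧
      π₁' ≫ cE = cW ≫ π₁ ∧ π₂' ≫ cP = cW ≫ π₂ ∧ ev' ≫ cQ = cW ≫ ev ∧
      IsFiberExponential p R π₁' π₂' ev' := by
  have := hE.fan.lift₁
  have := hE.fan.lift₂
  have := hE.ev_lift
  obtain ⟨E', cE, _⟩ := IsPreFibered.exists_isCartesian p (IsHomLift.codomain_eq p (𝟙 S) π₁) f
  obtain ⟨W', cW, _⟩ := IsPreFibered.exists_isCartesian p (IsHomLift.domain_eq p (𝟙 S) π₁) f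
  obtain ⟨Q', cQ, _⟩ :=
    IsPreFibered.exists_isCartesian p (IsHomLift.codomain_eq p (𝟙 S) ev) f
  refine ⟨E', W', Q', IsCartesian.map p f cE (cW ≫ π₁), IsCartesian.map p f cP (cW ≫ π₂),
    IsCartesian.map p f cQ (cW ≫ ev), cE, cW, cQ, inferInstance, inferInstance, inferInstance,
    IsCartesian.fac .., IsCartesian.fac .., IsCartesian.fac .., ?_⟩
  exact hstable _ _ _ _ _ _ cE cP cQ cW hE inferInstance hcP inferInstance inferInstance
    inferInstance inferInstance inferInstance (IsCartesian.fac ..) (IsCartesian.fac ..)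
    (IsCartesian.fac ..)

section Frobenius

open IsFiberExponential

variable {R S : 𝒮} {f : R ⟶ S} {P SfP Q Qf T T' : 𝒳} {t : P ⟶ SfP} {c : Qf ⟶ Q}
  {π₁ : T ⟶ P} {π₂ : T ⟶ Qf} {ρ₁ : T' ⟶ SfP} {ρ₂ : T' ⟶ Q} {m : T ⟶ T'}
  (hT : IsFiberProductFan p R π₁ π₂) (hT' : IsFiberProductFan p S ρ₁ ρ₂)
  (hm₁ : m ≫ ρ₁ = π₁ ≫ t) (hm₂ : m ≫ ρ₂ = π₂ ≫ c)
  {Y E W Y' E' W' : 𝒳} {πE : W ⟶ E} {πQ : W ⟶ Q} {ev : W ⟶ Y}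
  {π₁' : W' ⟶ E'} {π₂' : W' ⟶ Qf} {ev' : W' ⟶ Y'}
  {cE : E' ⟶ E} {cW : W' ⟶ W} {cY : Y' ⟶ Y}
  (hE : IsFiberExponential p S πE πQ ev) (hE' : IsFiberExponential p R π₁' π₂' ev')
  (e₁ : π₁' ≫ cE = cW ≫ πE) (e₂ : π₂' ≫ c = cW ≫ πQ) (e₃ : ev' ≫ cY = cW ≫ ev)

include hm₁ hm₂ e₁ e₂ e₃ in
lemma uncurry_comp_eq_comp_uncurry [p.IsCartesian f c] [p.IsCartesian f cE] [p.IsCartesian f cW]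
    [p.IsHomLift f m] {a : P ⟶ E'} {g : SfP ⟶ E}
    [p.IsHomLift (𝟙 R) a] [p.IsHomLift (𝟙 S) g] (hag : t ≫ g = a ≫ cE) :
    hE'.uncurry hT a ≫ cY = m ≫ hE.uncurry hT' g := by
  have := hT.lift₁
  have := hT.lift₂
  have := hT'.lift₁
  have := hT'.lift₂
  have hpair : hE'.fan.lift (π₁ ≫ a) π₂ ≫ cW = m ≫ hE.fan.lift (ρ₁ ≫ g) ρ₂ := by
    refine hE'.fan.hom_ext_of_isCartesian (f := f) e₁ e₂ ?_ ?_
    · rw [Category.assoc, ← e₁, ← Category.assoc, hE'.fan.lift_fst, Category.assoc, ← hag,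
        Category.assoc, hE.fan.lift_fst, ← Category.assoc m, hm₁, Category.assoc]
    · rw [Category.assoc, ← e₂, ← Category.assoc, hE'.fan.lift_snd, Category.assoc,
        hE.fan.lift_snd, hm₂]
  simp only [IsFiberExponential.uncurry, Category.assoc, e₃]
  rw [← Category.assoc, hpair, Category.assoc]

include hT hT' hm₁ hm₂ hE hE' e₁ e₂ e₃ in
theorem existsUnique_vertical_comp_eq [p.IsCocartesian f t] [p.IsCartesian f c]
    [p.IsCartesian f cE] [p.IsCartesian f cW] [p.IsCartesian f cY] [p.IsHomLift f m]
    (φ : T ⟶ Y) [p.IsHomLift f φ] : ∃! ψ : T' ⟶ Y, p.IsHomLift (𝟙 S) ψ ∧ m ≫ ψ = φ := by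
  obtain ⟨a, _, ha⟩ := hE'.exists_uncurry_eq hT (IsCartesian.map p f cY φ)
  let g := IsCocartesian.map p f t (a ≫ cE)
  refine ⟨hE.uncurry hT' g, ⟨inferInstance, ?_⟩, ?_⟩
  · rw [← uncurry_comp_eq_comp_uncurry (f := f) hT hT' hm₁ hm₂ hE hE' e₁ e₂ e₃
      (IsCocartesian.fac p f t _), ha, IsCartesian.fac]
  · rintro ψ ⟨_, hψ⟩
    obtain ⟨g', _, rfl⟩ := hE.exists_uncurry_eq hT' ψ
    have ha' : IsCartesian.map p f cE (t ≫ g') = a := by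
      refine hE'.uncurry_injective hT (IsCartesian.ext p f cY _ _ ?_)
      rw [uncurry_comp_eq_comp_uncurry (f := f) hT hT' hm₁ hm₂ hE hE' e₁ e₂ e₃
        (IsCartesian.fac ..).symm, hψ, ha, IsCartesian.fac]
    have hg' : g' = g := IsCocartesian.map_uniq p f t _ g' (by rw [← ha', IsCartesian.fac])
    subst hg'
    rfl

end Frobenius

end FOHL

open CategoryTheory CategoryTheory.Functor FOHL

theorem frobenius_of_stable_products_and_exponentials_general
    {𝒮 𝒳 : Type*} [Category 𝒮] [Category 𝒳] (p : 𝒳 ⥤ 𝒮) [p.IsFibered]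
    (hexp : ∀ (S : 𝒮) (P Q : 𝒳), p.obj P = S → p.obj Q = S →
      ∃ (E W : 𝒳) (π₁ : W ⟶ E) (π₂ : W ⟶ P) (ev : W ⟶ Q), IsFiberExponential p S π₁ π₂ ev)
    (hexpStable : ∀ {R S : 𝒮} (f : R ⟶ S), ExponentialsStableAlong p f)
    {R S : 𝒮} (f : R ⟶ S) {P SfP : 𝒳} (t : P ⟶ SfP) (ht : p.IsStronglyCocartesian f t)
    {Q Qf T T' : 𝒳} (c : Qf ⟶ Q) (hc : p.IsStronglyCartesian f c)
    (π₁ : T ⟶ P) (π₂ : T ⟶ Qf) (hT : IsFiberProductFan p R π₁ π₂)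
    (ρ₁ : T' ⟶ SfP) (ρ₂ : T' ⟶ Q) (hT' : IsFiberProductFan p S ρ₁ ρ₂)
    (m : T ⟶ T') (hm : p.IsHomLift f m)
    (hm₁ : m ≫ ρ₁ = π₁ ≫ t) (hm₂ : m ≫ ρ₂ = π₂ ≫ c) :
    p.IsStronglyCocartesian f m := by
  have := ht
  have := hc
  have := hm
  have := hT'.lift₂
  suffices p.IsCocartesian f m from isStronglyCocartesian_of_isCocartesian f m
  refine ⟨fun {Y} φ _ => ?_⟩
  obtain ⟨E, W, πE, πQ, ev, hE⟩ :=
    hexp S Q Y (IsHomLift.codomain_eq p (𝟙 S) ρ₂) (IsHomLift.codomain_eq p f φ)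
  obtain ⟨E', W', Y', π₁', π₂', ev', cE, cW, cY, _, _, _, e₁, e₂, e₃, hE'⟩ :=
    hE.exists_pullback (hexpStable f) hc
  exact existsUnique_vertical_comp_eq (f := f) hT hT' hm₁ hm₂ hE hE' e₁ e₂ e₃ φ

/-- In a Grothendieck fibration `p : 𝒳 ⥤ 𝒮` with stable fiberwise finite
products and stable fiberwise exponentials, every cocartesian morphism satisfies Frobenius
reciprocity: given a cocartesian lift `t : P ⟶ SfP` of `f : R ⟶ S`, a cartesian lift
`c : Qf ⟶ Q` of `f`, fiberwise product diagrams `P ∧ f*Q` and `(Σ_f P) ∧ Q`, the induced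
morphism `t ∧ c : P ∧ f*Q ⟶ (Σ_f P) ∧ Q` lying over `f` is again cocartesian. -/
theorem frobenius_of_stable_products_and_exponentials
    {𝒮 𝒳 : Type*} [Category 𝒮] [Category 𝒳] (p : 𝒳 ⥤ 𝒮) [p.IsFibered]
    (hterm : ∀ S : 𝒮, ∃ T, IsFiberTerminal p S T)
    (hprod : ∀ (S : 𝒮) (P Q : 𝒳), p.obj P = S → p.obj Q = S →
      ∃ (T : 𝒳) (π₁ : T ⟶ P) (π₂ : T ⟶ Q), IsFiberProductFan p S π₁ π₂)
    (hprodStable : ∀ {R S : 𝒮} (f : R ⟶ S), ProductsStableAlong p f)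
    (hexp : ∀ (S : 𝒮) (P Q : 𝒳), p.obj P = S → p.obj Q = S →
      ∃ (E W : 𝒳) (π₁ : W ⟶ E) (π₂ : W ⟶ P) (ev : W ⟶ Q), IsFiberExponential p S π₁ π₂ ev)
    (hexpStable : ∀ {R S : 𝒮} (f : R ⟶ S), ExponentialsStableAlong p f)
    {R S : 𝒮} (f : R ⟶ S) {P SfP : 𝒳} (t : P ⟶ SfP) (ht : p.IsStronglyCocartesian f t)
    {Q Qf T T' : 𝒳} (c : Qf ⟶ Q) (hc : p.IsStronglyCartesian f c)
    (π₁ : T ⟶ P) (π₂ : T ⟶ Qf) (hT : IsFiberProductFan p R π₁ π₂)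
    (ρ₁ : T' ⟶ SfP) (ρ₂ : T' ⟶ Q) (hT' : IsFiberProductFan p S ρ₁ ρ₂)
    (m : T ⟶ T') (hm : p.IsHomLift f m)
    (hm₁ : m ≫ ρ₁ = π₁ ≫ t) (hm₂ : m ≫ ρ₂ = π₂ ≫ c) :
    p.IsStronglyCocartesian f m :=
  frobenius_of_stable_products_and_exponentials_general p hexp hexpStable f t ht c hc π₁ π₂ hT ρ₁ ρ₂
    hT' m hm hm₁ hm₂
end

section
/- In a cartesian closed category C with terminal object ⊤, fix an object A, an object (X, x : X → A) of the slice C/A, and an object Y. Then the diagram exhibiting Y as Π along the unique map A → ⊤ applied to (X,x) — via a map p : Y × A → X over A — is a Π-diagram if and only if the square with vertices Y, X^A, ⊤, A^A, where Y → X^A is the transpose of p, ⊤ → A^A is the name of the identity on A, and X^A → A^A is x^A, is a pullback square. In other words, the right adjoint to pullback along A → ⊤ is computed as the object of sections of x. -/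
/-!
Transpose along the currying `q ↦ q̂ : (Z ⊗ A ⟶ X) ≃ (Z ⟶ X^A)` in the left factor `Z`.
It sends `u ▷ A ≫ p` to `u ≫ p̂`. A map `q` lies over `A` exactly when `q̂ ≫ x^A` is the
constant map at the name of `𝟙 A`. So the Π-property says that every such map to `X^A`
factors uniquely through `p̂`. Because the fourth corner `⊤` is terminal, this is the
universal property of the pullback square.
-/

open CategoryTheory CategoryTheory.Limits MonoidalCategory
open CartesianMonoidalCategory (fst snd toUnit)
open MonoidalClosed
attribute [local instance] BraidedCategory.ofCartesianMonoidalCategory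

lemma CategoryTheory.IsPullback.iff_existsUnique_of_isTerminal {C : Type*} [Category C]
    {P X Y T : C} {f : P ⟶ X} {t : P ⟶ T} {g : X ⟶ Y} {h : T ⟶ Y} (hT : IsTerminal T)
    (w : f ≫ g = t ≫ h) :
    IsPullback f t g h ↔
      ∀ (Z : C) (k : Z ⟶ X), k ≫ g = hT.from Z ≫ h → ∃! u : Z ⟶ P, u ≫ f = k := by
  constructor
  · intro hP Z k hk
    exact ⟨hP.lift k _ hk, hP.lift_fst _ _ _,
      fun v hv => hP.hom_ext (by rw [hv, hP.lift_fst]) (hT.hom_ext _ _)⟩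
  · intro hlift
    refine IsPullback.mk' w (fun Z φ φ' hf _ => ?_) (fun Z a b hab => ?_)
    · have hφ' : (φ' ≫ f) ≫ g = hT.from Z ≫ h := by
        rw [Category.assoc, w, ← Category.assoc, hT.hom_ext (φ' ≫ t)]
      exact (hlift Z _ hφ').unique hf rfl
    · obtain ⟨u, hu, -⟩ := hlift Z a (by rw [hab, hT.hom_ext b])
      exact ⟨u, hu, hT.hom_ext _ _⟩

namespace CategoryTheory.MonoidalClosed

variable {C : Type*} [Category C] [CartesianMonoidalCategory C] [MonoidalClosed C]

def curryRight (A : C) {Z X : C} : (Z ⊗ A ⟶ X) ≃ (Z ⟶ (ihom A).obj X) :=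
  (β_ A Z).symm.homFromEquiv.trans ((ihom.adjunction A).homEquiv Z X)

variable {A Z Z' X X' : C}

lemma curryRight_apply (q : Z ⊗ A ⟶ X) : curryRight A q = curry ((β_ A Z).hom ≫ q) := rfl

lemma curryRight_whiskerRight_comp (u : Z' ⟶ Z) (q : Z ⊗ A ⟶ X) :
    curryRight A (u ▷ A ≫ q) = u ≫ curryRight A q := by
  rw [curryRight_apply, curryRight_apply, ← curry_natural_left,
    BraidedCategory.braiding_naturality_right_assoc]

lemma curryRight_comp (q : Z ⊗ A ⟶ X) (x : X ⟶ X') :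
    curryRight A (q ≫ x) = curryRight A q ≫ (ihom A).map x := by
  rw [curryRight_apply, curryRight_apply, ← curry_natural_right, Category.assoc]

lemma curryRight_snd (Z A : C) :
    curryRight A (snd Z A) = toUnit Z ≫ curry (fst A (𝟙_ C)) := by
  rw [curryRight_apply, CartesianMonoidalCategory.braiding_hom_snd, ← curry_natural_left,
    CartesianMonoidalCategory.whiskerLeft_fst]

end CategoryTheory.MonoidalClosed

/-- In a cartesian closed category `C`, given `x : X ⟶ A` (an object of the
slice `C/A`) and an object `Y` together with `p : Y ⊗ A ⟶ X` over `A`, the map `p` exhibits `Y`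
as `Π_{A → ⊤}(X, x)` (i.e. for all `Z`, composing with `p` gives a bijection
`Hom(Z, Y) ≅ Hom_{C/A}((Z ⊗ A, π₂), (X, x))`) if and only if the square with vertices
`Y`, `X^A`, `⊤`, `A^A` — with `Y ⟶ X^A` the transpose of `p`, `⊤ ⟶ A^A` the name of the
identity of `A`, and `X^A ⟶ A^A` the map `x^A` — is a pullback.  In other words, the right
adjoint to pullback along `A → ⊤` is computed as the object of sections of `x`. -/
theorem pi_to_terminal_iff_sections_pullback {C : Type*} [Category C]
    [CartesianMonoidalCategory C] [MonoidalClosed C]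
    (A X Y : C) (x : X ⟶ A) (p : Y ⊗ A ⟶ X) (hp : p ≫ x = snd Y A) :
    (∀ (Z : C) (q : Z ⊗ A ⟶ X), q ≫ x = snd Z A →
        ∃! u : Z ⟶ Y, (u ▷ A) ≫ p = q) ↔
      IsPullback (MonoidalClosed.curry ((BraidedCategory.ofCartesianMonoidalCategory.braiding A Y).hom ≫ p)) (toUnit Y)
        ((ihom A).map x) (MonoidalClosed.curry (fst A (𝟙_ C))) := by
  have over_iff (Z : C) (q : Z ⊗ A ⟶ X) : q ≫ x = snd Z A ↔
      curryRight A q ≫ (ihom A).map x = toUnit Z ≫ curry (fst A (𝟙_ C)) := by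
    rw [← curryRight_comp, ← curryRight_snd, (curryRight A).apply_eq_iff_eq]
  have factor_iff (Z : C) (u : Z ⟶ Y) (q : Z ⊗ A ⟶ X) :
      u ▷ A ≫ p = q ↔ u ≫ curryRight A p = curryRight A q := by
    rw [← curryRight_whiskerRight_comp, (curryRight A).apply_eq_iff_eq]
  rw [← curryRight_apply, IsPullback.iff_existsUnique_of_isTerminal
    CartesianMonoidalCategory.isTerminalTensorUnit ((over_iff Y p).mp hp)]
  refine forall_congr' fun Z => ((curryRight A).forall_congr fun q => ?_)
  simp only [over_iff, factor_iff]
  rfl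
end

section
/- If C is a locally cartesian closed category, then for every morphism f : A → B the pullback functor f* : C/B → C/A has a right adjoint Π_f; the case of general f reduces to the case where B is terminal via the canonical isomorphisms of slice categories (C/A) ≅ (C/B)/(A, f) and (C/B) ≅ (C/B)/(B, id). -/
/-!
Write `F` for `f` viewed as an object of `C/B`. Under the iterated-slice equivalence
`(C/B)/F ≌ C/A`, the pullback functor `f*` becomes `X ↦ F × X` (as an object over `F`), since both
are right adjoint to `Σ_f`. In the cartesian closed category `C/B` this functor has a right
adjoint, sending `p : Y ⟶ F` to the pullback of `F ⟹ p` along the name `1 ⟶ F ⟹ F` of `𝟙 F`.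
-/

open CategoryTheory CategoryTheory.Limits

namespace CategoryTheory

theorem isLeftAdjoint_toOver {D : Type*} [Category D] [HasPullbacks D]
    [CartesianMonoidalCategory D] (X : D) [Closed X] : (toOver X).IsLeftAdjoint :=
  let := BraidedCategory.ofCartesianMonoidalCategory (C := D)
  let := ChosenPullbacksAlong.ofHasPullbacksAlong (curryRightUnitorHom X)
  (Over.toOverSectionsAdj X).isLeftAdjoint

namespace Over

noncomputable def pullbackIsoToOverCompIteratedSlice {C : Type*} [Category C] [HasPullbacks C]
    {A B : C} (f : A ⟶ B) [CartesianMonoidalCategory (Over B)] :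
    Over.pullback f ≅ toOver (Over.mk f) ⋙ (Over.mk f).iteratedSliceEquiv.functor :=
  (mapPullbackAdj f).rightAdjointUniq
    ((Over.mk f).iteratedSliceEquiv.symm.toAdjunction.comp (forgetAdjToOver _))

end Over

end CategoryTheory

theorem pullback_isLeftAdjoint_of_locallyCartesianClosed_general {C : Type*} [Category C]
    [HasPullbacks C]
    (hccc : ∀ X : C, ∃ h : CartesianMonoidalCategory (Over X),
      Nonempty (@MonoidalClosed (Over X) _ h.toMonoidalCategory))
    {A B : C} (f : A ⟶ B) :
    (Over.pullback f).IsLeftAdjoint := by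
  obtain ⟨_, ⟨_⟩⟩ := hccc B
  have := isLeftAdjoint_toOver (Over.mk f)
  exact Functor.isLeftAdjoint_of_iso (Over.pullbackIsoToOverCompIteratedSlice f).symm

/-- If `C` is locally cartesian closed (it has a terminal object, pullbacks,
and every slice is cartesian closed), then for every morphism `f : A ⟶ B` the pullback functor
`f* : C/B ⥤ C/A` has a right adjoint `Π_f`, i.e. `f*` is a left adjoint. -/
theorem pullback_isLeftAdjoint_of_locallyCartesianClosed {C : Type*} [Category C]
    [HasTerminal C] [HasPullbacks C]
    (hccc : ∀ X : C, ∃ h : CartesianMonoidalCategory (Over X),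
      Nonempty (@MonoidalClosed (Over X) _ h.toMonoidalCategory))
    {A B : C} (f : A ⟶ B) :
    (Over.pullback f).IsLeftAdjoint :=
  pullback_isLeftAdjoint_of_locallyCartesianClosed_general hccc f
end

section
/- In a right-proper model category in which the cofibrations are exactly the monomorphisms, if p : X → Y is a fibration and C is a fibrant object, then the induced map on exponentials p^C : X^C → Y^C is a fibration. -/
open CategoryTheory CategoryTheory.Limits

/-- A model structure on a category `C`: classes of weak equivalences, cofibrations and
fibrations satisfying two-out-of-three, the lifting axioms (in the strong form in which the
(trivial) cofibrations are characterized by the lifting property, which also encodes retract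
closure), and the two factorization axioms. -/
structure ModelStruct (C : Type*) [Category C] where
  weq : MorphismProperty C
  cof : MorphismProperty C
  fib : MorphismProperty C
  weq_of_iso : ∀ {X Y : C} (f : X ⟶ Y), IsIso f → weq f
  weq_comp : ∀ {X Y Z : C} (f : X ⟶ Y) (g : Y ⟶ Z), weq f → weq g → weq (f ≫ g)
  weq_cancel_left : ∀ {X Y Z : C} (f : X ⟶ Y) (g : Y ⟶ Z), weq f → weq (f ≫ g) → weq g
  weq_cancel_right : ∀ {X Y Z : C} (f : X ⟶ Y) (g : Y ⟶ Z), weq g → weq (f ≫ g) → weq f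
  cof_iff_llp : ∀ {A B : C} (i : A ⟶ B),
    cof i ↔ ∀ {X Y : C} (q : X ⟶ Y), fib q → weq q → HasLiftingProperty i q
  fib_iff_rlp : ∀ {X Y : C} (q : X ⟶ Y),
    fib q ↔ ∀ {A B : C} (i : A ⟶ B), cof i → weq i → HasLiftingProperty i q
  fact_left : ∀ {X Y : C} (f : X ⟶ Y), ∃ (Z : C) (i : X ⟶ Z) (q : Z ⟶ Y),
    cof i ∧ weq i ∧ fib q ∧ i ≫ q = f
  fact_right : ∀ {X Y : C} (f : X ⟶ Y), ∃ (Z : C) (i : X ⟶ Z) (q : Z ⟶ Y),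
    cof i ∧ fib q ∧ weq q ∧ i ≫ q = f

variable {C : Type*} [Category C]

/-- Right properness: weak equivalences are stable under pullback along fibrations. -/
def ModelStruct.RightProper (M : ModelStruct C) : Prop :=
  ∀ {W X Y Z : C} (p' : W ⟶ X) (f' : W ⟶ Y) (f : X ⟶ Z) (q : Y ⟶ Z),
    IsPullback p' f' f q → M.fib q → M.weq f → M.weq f'

/-- An object is fibrant if its map to a terminal object is a fibration. -/
def ModelStruct.Fibrant (M : ModelStruct C) (X : C) : Prop :=
  ∃ (T : C) (hT : IsTerminal T), M.fib (hT.from X)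

/-- An object is cofibrant if the map from an initial object is a cofibration. -/
def ModelStruct.Cofibrant (M : ModelStruct C) (X : C) : Prop :=
  ∃ (I : C) (hI : IsInitial I), M.cof (hI.to X)

open MonoidalCategory

/-!
By adjunction, `p^C` lifts against a trivial cofibration `i` iff `p` lifts against `C ◁ i`.
The map `C ◁ i` is the base change of `i` along the projection `C ⊗ B ⟶ B`, which is a
fibration because `C` is fibrant; hence `C ◁ i` is a monomorphism (monomorphisms are stable
under pullback) and a weak equivalence (right properness).
-/

open CartesianMonoidalCategory

lemma CategoryTheory.CartesianMonoidalCategory.isPullback_snd_whiskerLeft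
    [CartesianMonoidalCategory C] (Z : C) {A B : C} (i : A ⟶ B) :
    IsPullback (snd Z A) (Z ◁ i) i (snd Z B) :=
  have product (W : C) :=
    IsPullback.of_is_product' (tensorProductIsBinaryProduct Z W) isTerminalTensorUnit
  (IsPullback.of_right (by simpa using product A) (by simp) (product B)).flip

namespace ModelStruct

variable (M : ModelStruct C)

lemma fib_of_isPullback {P X Y Z : C} {fst : P ⟶ X} {snd : P ⟶ Y} {f : X ⟶ Z} {g : Y ⟶ Z}
    (h : IsPullback fst snd f g) (hf : M.fib f) : M.fib snd :=
  (M.fib_iff_rlp snd).2 fun i hc hw =>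
    have := (M.fib_iff_rlp f).1 hf i hc hw
    h.hasLiftingProperty i

variable [CartesianMonoidalCategory C] {M}

lemma Fibrant.fib_snd {Z : C} (hZ : M.Fibrant Z) (B : C) : M.fib (snd Z B) := by
  obtain ⟨T, hT, hfib⟩ := hZ
  exact M.fib_of_isPullback (IsPullback.of_is_product' (tensorProductIsBinaryProduct Z B) hT) hfib

lemma cof_whiskerLeft (hcof : ∀ {X Y : C} (f : X ⟶ Y), M.cof f ↔ Mono f) (Z : C)
    {A B : C} {i : A ⟶ B} (hi : M.cof i) : M.cof (Z ◁ i) :=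
  have : Mono i := (hcof i).1 hi
  (hcof _).2 (isPullback_snd_whiskerLeft Z i).mono_snd_of_mono

lemma RightProper.weq_whiskerLeft (hrp : M.RightProper) {Z : C} (hZ : M.Fibrant Z)
    {A B : C} {i : A ⟶ B} (hi : M.weq i) : M.weq (Z ◁ i) :=
  hrp _ _ _ _ (isPullback_snd_whiskerLeft Z i) (hZ.fib_snd B) hi

end ModelStruct

/-- In a right-proper model category whose cofibrations are exactly the
monomorphisms (and whose underlying category is cartesian closed), if `p : X ⟶ Y` is a
fibration and `Cobj` is a fibrant object, then the induced map on exponentials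
`p^C : X^C ⟶ Y^C` is a fibration. -/
theorem fibration_exp_of_fibration {C : Type*} [Category C]
    [CartesianMonoidalCategory C] [MonoidalClosed C]
    (M : ModelStruct C) (hrp : M.RightProper)
    (hcof : ∀ {X Y : C} (f : X ⟶ Y), M.cof f ↔ Mono f)
    {X Y : C} (p : X ⟶ Y) (hp : M.fib p)
    (Cobj : C) (hC : M.Fibrant Cobj) :
    M.fib ((ihom Cobj).map p) := by
  refine (M.fib_iff_rlp _).2 fun i hc hw => ?_
  rw [← (ihom.adjunction Cobj).hasLiftingProperty_iff]
  exact (M.fib_iff_rlp p).1 hp (Cobj ◁ i)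
    (ModelStruct.cof_whiskerLeft hcof Cobj hc) (hrp.weq_whiskerLeft hC hw)
end

section
/- Generalized universal property of cartesian lifts in a 1-discrete 2-fibration: given a 1D2F p : C → B, a cartesian 1-cell q : Q → R over g : B₀ → C₀, a 1-cell r : P → R over h : A → C₀, a 1-cell f : A → B₀, and a 2-cell α : h → g ∘ f in B, there exists a unique 1-cell p' : P → Q over f for which there exists a (necessarily unique) 2-cell r → q ∘ p' over α. -/
open CategoryTheory CategoryTheory.Bicategory

namespace FOHL

variable (C : Type*) (B : Type*) [Bicategory C] [Bicategory.Strict C]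
  [Bicategory B] [Bicategory.Strict B]

/-- A (strict) 2-functor between strict 2-categories: a functor on underlying 1-categories
together with an action on 2-cells, strictly compatible with vertical composition,
identities and whiskering. -/
structure TwoFunctor where
  toFunctor : C ⥤ B
  map₂ : ∀ {a b : C} {f g : a ⟶ b}, (f ⟶ g) → (toFunctor.map f ⟶ toFunctor.map g)
  map₂_id : ∀ {a b : C} (f : a ⟶ b), map₂ (𝟙 f) = 𝟙 (toFunctor.map f)
  map₂_comp : ∀ {a b : C} {f g h : a ⟶ b} (η : f ⟶ g) (θ : g ⟶ h),
    map₂ (η ≫ θ) = map₂ η ≫ map₂ θ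
  map₂_whiskerLeft : ∀ {a b c : C} (f : a ⟶ b) {g h : b ⟶ c} (η : g ⟶ h),
    map₂ (f ◁ η) = eqToHom (toFunctor.map_comp f g) ≫ (toFunctor.map f ◁ map₂ η) ≫
      eqToHom (toFunctor.map_comp f h).symm
  map₂_whiskerRight : ∀ {a b c : C} {f g : a ⟶ b} (η : f ⟶ g) (h : b ⟶ c),
    map₂ (η ▷ h) = eqToHom (toFunctor.map_comp f h) ≫ (map₂ η ▷ toFunctor.map h) ≫
      eqToHom (toFunctor.map_comp g h).symm

variable {C B}

/-- Auxiliary inductive expressing that a 2-cell `η` of `C` lies over a 2-cell `θ` of `B`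
with respect to the 2-functor `P` (cf. `CategoryTheory.IsHomLiftAux`). -/
inductive IsTwoCellLiftAux (P : TwoFunctor C B) :
    ∀ {R S : B} {u v : R ⟶ S}, (u ⟶ v) → ∀ {a b : C} {f g : a ⟶ b}, (f ⟶ g) → Prop
  | map {a b : C} {f g : a ⟶ b} (η : f ⟶ g) : IsTwoCellLiftAux P (P.map₂ η) η

/-- The 2-cell `η` of `C` lies over the 2-cell `θ` of `B`. -/
def TwoFunctor.IsLift₂ (P : TwoFunctor C B) {R S : B} {u v : R ⟶ S} (θ : u ⟶ v)
    {a b : C} {f g : a ⟶ b} (η : f ⟶ g) : Prop :=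
  IsTwoCellLiftAux P θ η

/-- `P` is a 1-discrete 2-fibration: the underlying functor of 1-categories is a Grothendieck
fibration and, for every 2-cell `α` of the base and every 1-cell lying over its domain, there
is a unique 2-cell lying over `α` with that 1-cell as domain. -/
structure TwoFunctor.Is1D2F (P : TwoFunctor C B) : Prop where
  fibered : P.toFunctor.IsFibered
  lift₂ : ∀ {R S : B} {u v : R ⟶ S} (α : u ⟶ v) {a b : C} (m : a ⟶ b),
    P.toFunctor.IsHomLift u m →
      ∃! gη : Σ g' : a ⟶ b, m ⟶ g', P.IsLift₂ α gη.2

/-- A 1-cell in a (strict) 2-category is an equivalence if it admits a quasi-inverse. -/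
def IsEquivalenceOneCell {a b : C} (f : a ⟶ b) : Prop :=
  ∃ g : b ⟶ a, Nonempty (𝟙 a ≅ f ≫ g) ∧ Nonempty (𝟙 b ≅ g ≫ f)

end FOHL

open CategoryTheory CategoryTheory.Functor FOHL

/-!
Lift `α` along `r` to the unique 2-cell `η : r ⟶ g'` over it; `g'` lies over `f ≫ g`, so it
factors uniquely as `p' ≫ q` with `p'` over `f`. If `p''` over `f` also carries a 2-cell
`r ⟶ p'' ≫ q` over `α`, uniqueness of 2-cell lifts forces `p'' ≫ q = g'`, and then `p'' = p'`
because `q` is cartesian.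
-/

namespace FOHL.TwoFunctor

variable {C B : Type*} [Bicategory C] [Bicategory.Strict C] [Bicategory B] [Bicategory.Strict B]
  {P : TwoFunctor C B} {R S : B} {u v : R ⟶ S} {a b : C}

lemma IsLift₂.isHomLift_dom {θ : u ⟶ v} {m n : a ⟶ b} {η : m ⟶ n} (hη : P.IsLift₂ θ η) :
    P.toFunctor.IsHomLift u m := by
  cases hη; infer_instance

lemma IsLift₂.isHomLift_cod {θ : u ⟶ v} {m n : a ⟶ b} {η : m ⟶ n} (hη : P.IsLift₂ θ η) :
    P.toFunctor.IsHomLift v n := by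
  cases hη; infer_instance

lemma Is1D2F.cod_eq_of_isLift₂ (hP : P.Is1D2F) {α : u ⟶ v} {m n n' : a ⟶ b}
    {η : m ⟶ n} {η' : m ⟶ n'} (hη : P.IsLift₂ α η) (hη' : P.IsLift₂ α η') : n = n' :=
  congrArg Sigma.fst <|
    (hP.lift₂ α m hη.isHomLift_dom).unique (y₁ := ⟨n, η⟩) (y₂ := ⟨n', η'⟩) hη hη'

end FOHL.TwoFunctor

/-- generalized universal property of cartesian lifts in a 1-discrete
2-fibration. Given a 1D2F `P : C ⥤ B`, a cartesian 1-cell `q : Q₀ ⟶ R₀` over `g : B₀ ⟶ C₀`,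
a 1-cell `r : P₀ ⟶ R₀` over `h : A ⟶ C₀`, a 1-cell `f : A ⟶ B₀`, and a 2-cell
`α : h ⟶ g ∘ f` in the base, there exists a unique 1-cell `p' : P₀ ⟶ Q₀` over `f` for which
there exists a (necessarily unique) 2-cell `r ⟶ q ∘ p'` over `α`. -/
theorem oneD2F_cartesian_generalized_universal_property
    {C B : Type*} [Bicategory C] [Bicategory.Strict C] [Bicategory B] [Bicategory.Strict B]
    (P : TwoFunctor C B) (hP : P.Is1D2F)
    {A B₀ C₀ : B} {P₀ Q₀ R₀ : C}
    (f : A ⟶ B₀) (g : B₀ ⟶ C₀) (h : A ⟶ C₀) (α : h ⟶ f ≫ g)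
    (q : Q₀ ⟶ R₀) (hq : P.toFunctor.IsStronglyCartesian g q)
    (r : P₀ ⟶ R₀) (hr : P.toFunctor.IsHomLift h r) :
    ∃! p' : P₀ ⟶ Q₀, P.toFunctor.IsHomLift f p' ∧
      ∃ τ : r ⟶ p' ≫ q, P.IsLift₂ α τ := by
  obtain ⟨⟨g', η⟩, hη, -⟩ := hP.lift₂ α r hr
  have : P.toFunctor.IsHomLift (f ≫ g) g' := hη.isHomLift_cod
  have := hq
  obtain ⟨p', ⟨hp', rfl⟩, hp'_uniq⟩ :=
    IsStronglyCartesian.universal_property P.toFunctor g q f (f ≫ g) rfl g'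
  refine ⟨p', ⟨hp', η, hη⟩, ?_⟩
  rintro p'' ⟨hp'', τ, hτ⟩
  exact hp'_uniq p'' ⟨hp'', hP.cod_eq_of_isLift₂ hτ hη⟩
end

section
/- Uniqueness of cartesian lifts in a 1D2F up to invertible 2-cell over an invertible 2-cell: given a 1D2F p : C → B, 1-cells p : P → R over f and q : Q → R over g, both cartesian, a vertical 1-cell r : P → Q (lying over an identity), and a 2-cell σ : p → q ∘ r lying over an invertible 2-cell α : f → g, the 1-cell r is an isomorphism. -/
open CategoryTheory CategoryTheory.Bicategory

/-!
Lift `α⁻¹` along the 1D2F at `q` to a 2-cell `τ : q ⟶ q'`. Pasting `σ` with `r ◁ τ` gives a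
2-cell `pm ⟶ r ≫ q'` over `α ≫ α⁻¹`, an identity, and lifts of identity 2-cells are unique, so
`r ≫ q' = pm`. Factoring `q'` through the cartesian `pm` gives a vertical `s` with `s ≫ pm = q'`;
pasting `τ` with `s ◁ σ` lies over `α⁻¹ ≫ α` and shows `s ≫ r ≫ q = q` in the same way. Since `pm`
and `q` are cartesian, `r ≫ s` and `s ≫ r` are identities.
-/

namespace CategoryTheory.Bicategory.Strict

variable {B : Type*} [Bicategory B] [Bicategory.Strict B]

lemma id_whiskerLeft_eq {a b : B} {f g : a ⟶ b} (η : f ⟶ g) :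
    𝟙 a ◁ η = eqToHom (Category.id_comp f) ≫ η ≫ eqToHom (Category.id_comp g).symm := by
  simp [Bicategory.id_whiskerLeft, leftUnitor_eqToIso]

lemma comp_eqToHom_id_whiskerLeft {a b : B} {f g : a ⟶ b} {α : f ⟶ g} {β : g ⟶ f}
    (hαβ : α ≫ β = 𝟙 f) :
    α ≫ eqToHom (Category.id_comp g).symm ≫ 𝟙 a ◁ β = eqToHom (Category.id_comp f).symm := by
  simp only [id_whiskerLeft_eq, eqToHom_trans_assoc, eqToHom_refl, Category.id_comp,
    reassoc_of% hαβ]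

end CategoryTheory.Bicategory.Strict

namespace FOHL.TwoFunctor

variable {C B : Type*} [Bicategory C] [Bicategory.Strict C] [Bicategory B] [Bicategory.Strict B]
  {P : TwoFunctor C B}

lemma isLift₂_iff {R S : B} {u v : R ⟶ S} (θ : u ⟶ v) {a b : C} {f g : a ⟶ b} (η : f ⟶ g) :
    P.IsLift₂ θ η ↔ ∃ (_ : R = P.toFunctor.obj a) (_ : S = P.toFunctor.obj b),
      HEq u (P.toFunctor.map f) ∧ HEq v (P.toFunctor.map g) ∧ HEq θ (P.map₂ η) := by
  constructor
  · rintro ⟨⟩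
    exact ⟨rfl, rfl, .rfl, .rfl, .rfl⟩
  · rintro ⟨rfl, rfl, hu, hv, hθ⟩
    obtain rfl := eq_of_heq hu
    obtain rfl := eq_of_heq hv
    obtain rfl := eq_of_heq hθ
    exact .map η

lemma isLift₂_eqToHom_id {R S : B} {u v : R ⟶ S} (huv : u = v) {a b : C} {f : a ⟶ b}
    [P.toFunctor.IsHomLift u f] : P.IsLift₂ (eqToHom huv) (𝟙 f) := by
  subst huv
  have hR := IsHomLift.domain_eq P.toFunctor u f
  have hS := IsHomLift.codomain_eq P.toFunctor u f
  subst hR hS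
  obtain rfl := IsHomLift.eq_of_isHomLift P.toFunctor u f
  rw [eqToHom_refl, ← P.map₂_id]
  exact .map _

namespace IsLift₂

variable {R S : B} {u v w : R ⟶ S} {θ : u ⟶ v} {θ' : v ⟶ w}
  {a b : C} {f g h : a ⟶ b} {η : f ⟶ g} {η' : g ⟶ h}

lemma isHomLift_source (hη : P.IsLift₂ θ η) : P.toFunctor.IsHomLift u f := by
  obtain ⟨rfl, rfl, hu, -, -⟩ := (isLift₂_iff θ η).1 hη
  obtain rfl := eq_of_heq hu
  infer_instance

lemma isHomLift_target (hη : P.IsLift₂ θ η) : P.toFunctor.IsHomLift v g := by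
  obtain ⟨rfl, rfl, -, hv, -⟩ := (isLift₂_iff θ η).1 hη
  obtain rfl := eq_of_heq hv
  infer_instance

lemma comp (hη : P.IsLift₂ θ η) (hη' : P.IsLift₂ θ' η') : P.IsLift₂ (θ ≫ θ') (η ≫ η') := by
  obtain ⟨rfl, rfl, hu, hv, hθ⟩ := (isLift₂_iff θ η).1 hη
  obtain ⟨-, -, -, hw, hθ'⟩ := (isLift₂_iff θ' η').1 hη'
  obtain rfl := eq_of_heq hu
  obtain rfl := eq_of_heq hv
  obtain rfl := eq_of_heq hw
  obtain rfl := eq_of_heq hθ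
  obtain rfl := eq_of_heq hθ'
  rw [← P.map₂_comp]
  exact .map _

lemma whiskerLeft {Q : B} {x : C} {k : Q ⟶ R} {m : x ⟶ a} [P.toFunctor.IsHomLift k m]
    (hη : P.IsLift₂ θ η) : P.IsLift₂ (k ◁ θ) (m ◁ η) := by
  obtain ⟨rfl, rfl, hu, hv, hθ⟩ := (isLift₂_iff θ η).1 hη
  obtain rfl := eq_of_heq hu
  obtain rfl := eq_of_heq hv
  obtain rfl := eq_of_heq hθ
  obtain rfl : Q = P.toFunctor.obj x := (IsHomLift.domain_eq P.toFunctor k m).symm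
  obtain rfl := IsHomLift.eq_of_isHomLift P.toFunctor k m
  refine (isLift₂_iff _ _).2 ⟨rfl, rfl, ?_, ?_, ?_⟩
  · rw [P.toFunctor.map_comp]
  · rw [P.toFunctor.map_comp]
  · rw [P.map₂_whiskerLeft]
    simp

end IsLift₂

lemma Is1D2F.eq_of_isLift₂_eqToHom (hP : P.Is1D2F) {R S : B} {u v : R ⟶ S} (huv : u = v)
    {a b : C} {f g : a ⟶ b} {η : f ⟶ g} (hη : P.IsLift₂ (eqToHom huv) η) : f = g := by
  subst huv
  have := hη.isHomLift_source
  obtain ⟨_, -, huniq⟩ := hP.lift₂ (eqToHom rfl) f this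
  exact congrArg Sigma.fst ((huniq ⟨f, 𝟙 f⟩ (isLift₂_eqToHom_id rfl)).trans (huniq ⟨g, η⟩ hη).symm)

end FOHL.TwoFunctor

open CategoryTheory CategoryTheory.Functor FOHL

/-- uniqueness of cartesian lifts in a 1D2F up to invertible 2-cell over an
invertible 2-cell. Given a 1D2F `P : C ⥤ B`, cartesian 1-cells `pm : P₀ ⟶ R₀` over `f` and
`q : Q₀ ⟶ R₀` over `g`, a vertical 1-cell `r : P₀ ⟶ Q₀` (lying over the identity), and a
2-cell `σ : pm ⟶ r ≫ q` lying over an invertible 2-cell `α : f ⟶ g`, the 1-cell `r` is an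
isomorphism. -/
theorem oneD2F_cartesian_unique_up_to_iso
    {C B : Type*} [Bicategory C] [Bicategory.Strict C] [Bicategory B] [Bicategory.Strict B]
    (P : TwoFunctor C B) (hP : P.Is1D2F)
    {A B₀ : B} {P₀ Q₀ R₀ : C}
    (f g : A ⟶ B₀) (α : f ⟶ g) (hα : IsIso α)
    (pm : P₀ ⟶ R₀) (hpm : P.toFunctor.IsStronglyCartesian f pm)
    (q : Q₀ ⟶ R₀) (hq : P.toFunctor.IsStronglyCartesian g q)
    (r : P₀ ⟶ Q₀) (hr : P.toFunctor.IsHomLift (𝟙 A) r)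
    (σ : pm ⟶ r ≫ q) (hσ : P.IsLift₂ α σ) :
    IsIso r := by
  obtain ⟨⟨q', τ⟩, hτ, -⟩ := hP.lift₂ (inv α) q inferInstance
  have hpm_eq : pm = r ≫ q' := by
    have h := hσ.comp ((TwoFunctor.isLift₂_eqToHom_id (Category.id_comp g).symm).comp
      (hτ.whiskerLeft (k := 𝟙 A)))
    rw [Bicategory.Strict.comp_eqToHom_id_whiskerLeft (IsIso.hom_inv_id α)] at h
    exact hP.eq_of_isLift₂_eqToHom _ h
  have := hτ.isHomLift_target
  obtain ⟨s, hs, rfl⟩ : ∃ s, P.toFunctor.IsHomLift (𝟙 A) s ∧ s ≫ pm = q' :=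
    ⟨_, inferInstance, IsCartesian.fac P.toFunctor f pm q'⟩
  have hq_eq : q = s ≫ r ≫ q := by
    have h := hτ.comp ((TwoFunctor.isLift₂_eqToHom_id (Category.id_comp f).symm).comp
      (hσ.whiskerLeft (k := 𝟙 A)))
    rw [Bicategory.Strict.comp_eqToHom_id_whiskerLeft (IsIso.inv_hom_id α)] at h
    exact hP.eq_of_isLift₂_eqToHom _ h
  refine ⟨s, ?_, ?_⟩
  · rw [← IsCartesian.map_self P.toFunctor f pm]
    exact IsCartesian.map_uniq P.toFunctor f pm pm (r ≫ s) (by rw [Category.assoc, ← hpm_eq])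
  · rw [← IsCartesian.map_self P.toFunctor g q]
    exact IsCartesian.map_uniq P.toFunctor g q q (s ≫ r) (by rw [Category.assoc, ← hq_eq])
end
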